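/- For every t ∈ ℝ, let F₀(t) = (1−t)·D₀ + t·D₁ (a variable point on the line L₀) and let N₀(t) be the line through F₀(t) and R(F₀(t)). Then N₀(t) meets the parabola 𝒫 in exactly one point; that is, every line N₀(t) is tangent to the parabola with focus O and directrix y = −2s. -/

import Mathlib

/- STATEMENT 13: With F₀(t) = (1−t)·D₀ + t·D₁ on L₀ and N₀(t) the line through F₀(t) and
its rotate R(F₀(t)) by 8π/9 about the origin, every line N₀(t) meets the parabola
𝒫 = {(x,y) : x² = 4sy + 4s²} (focus O, directrix y = −2s) in exactly one point,
i.e. is tangent to 𝒫. -/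

open Real

noncomputable section

abbrev Pt := EuclideanSpace ℝ (Fin 2)

def pt (x y : ℝ) : Pt := (WithLp.equiv 2 _).symm ![x, y]

/-- The affine line through two points `A` and `B`. -/
def lineThrough (A B : Pt) : Set Pt := {P | ∃ t : ℝ, P = A + t • (B - A)}

/-- Counterclockwise rotation by angle `θ` about the point `c`. -/
def rotAbout (θ : ℝ) (c p : Pt) : Pt :=
  pt (c 0 + Real.cos θ * (p 0 - c 0) - Real.sin θ * (p 1 - c 1))
     (c 1 + Real.sin θ * (p 0 - c 0) + Real.cos θ * (p 1 - c 1))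

/-- The origin. -/
def O : Pt := pt 0 0

/-- Vertices of the regular 9-gon: `D i = (cos(2πi/9 + 17π/18), sin(2πi/9 + 17π/18))`. -/
def D (i : ℤ) : Pt :=
  pt (Real.cos (2 * π * i / 9 + 17 * π / 18)) (Real.sin (2 * π * i / 9 + 17 * π / 18))

/-- The variable point `F₀(t) = (1-t)·D₀ + t·D₁` on the line `L₀`. -/
def F₀ (t : ℝ) : Pt := (1 - t) • D 0 + t • D 1

/-- The line `N₀(t)` through `F₀(t)` and its rotate by 8π/9 about the origin. -/
def N₀ (t : ℝ) : Set Pt := lineThrough (F₀ t) (rotAbout (8 * π / 9) O (F₀ t))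

/-- The constant s = sin(π/18)·cos(π/9). -/
def s : ℝ := Real.sin (π / 18) * Real.cos (π / 9)

/-- The parabola x² = 4sy + 4s², with focus the origin and directrix y = −2s. -/
def parab : Set Pt := {p : Pt | (p 0) ^ 2 = 4 * s * (p 1) + 4 * s ^ 2}

/-! The focus `O` is equidistant from `F = F₀ t` and `R F`, so the foot of the perpendicular from `O`
to `N₀ t` is the midpoint of `F` and `R F`, and a line is tangent to the parabola as soon as this
foot lies on the vertex tangent `y = -s`. Now `1 + R = 2 cos (4π/9) R'` with `R'` the rotation by
`4π/9`, which maps `L₀` onto the line `y = -cos (π/9)`; as `cos (4π/9) = sin (π/18)`, the midpoint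
has height `-s`. -/

lemma pt_apply_zero (x y : ℝ) : pt x y 0 = x := rfl

lemma pt_apply_one (x y : ℝ) : pt x y 1 = y := rfl

lemma norm_sq_eq_sq_add_sq (p : Pt) : ‖p‖ ^ 2 = p 0 ^ 2 + p 1 ^ 2 := by
  simp [EuclideanSpace.norm_sq_eq, Fin.sum_univ_two]

lemma norm_rotAbout_origin (θ : ℝ) (p : Pt) : ‖rotAbout θ O p‖ = ‖p‖ := by
  have hsq : ‖rotAbout θ O p‖ ^ 2 = ‖p‖ ^ 2 := by
    simp only [norm_sq_eq_sq_add_sq, rotAbout, O, pt_apply_zero, pt_apply_one]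
    linear_combination (p 0 ^ 2 + p 1 ^ 2) * sin_sq_add_cos_sq θ
  exact (pow_left_inj₀ (norm_nonneg _) (norm_nonneg _) two_ne_zero).mp hsq

/-- Since `‖A‖ = ‖B‖`, the foot of the perpendicular from the focus to `AB` is the midpoint of
`AB`, which lies on the vertex tangent `y = -c`; this makes the equation of the parabola, restricted
to the line, the perfect square `((B 0 - A 0) u - B 0) ^ 2 = 0`. -/
theorem existsUnique_mem_lineThrough_inter_parabola {c : ℝ} {A B : Pt} (hAB : A 0 ≠ B 0)
    (hnorm : ‖A‖ = ‖B‖) (hmid : A 1 + B 1 = -2 * c) :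
    ∃! X : Pt, X ∈ lineThrough A B ∩ {p : Pt | p 0 ^ 2 = 4 * c * p 1 + 4 * c ^ 2} := by
  have hsq : A 0 ^ 2 + A 1 ^ 2 = B 0 ^ 2 + B 1 ^ 2 := by
    rw [← norm_sq_eq_sq_add_sq, ← norm_sq_eq_sq_add_sq, hnorm]
  have hv : B 0 - A 0 ≠ 0 := sub_ne_zero.mpr hAB.symm
  have hline (u : ℝ) (i : Fin 2) : (A + u • (B - A)) i = A i + u * (B i - A i) := rfl
  have hmem (u : ℝ) : (A + u • (B - A)) 0 ^ 2 = 4 * c * (A + u • (B - A)) 1 + 4 * c ^ 2 ↔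
      u = B 0 / (B 0 - A 0) := by
    rw [hline, hline]
    have hsquare : (A 0 + u * (B 0 - A 0)) ^ 2 - (4 * c * (A 1 + u * (B 1 - A 1)) + 4 * c ^ 2)
        = ((B 0 - A 0) * u - B 0) ^ 2 := by
      linear_combination (1 - 2 * u) * hsq + (B 1 - A 1 - 2 * u * (B 1 - A 1) - 2 * c) * hmid
    rw [← sub_eq_zero, hsquare, sq_eq_zero_iff, sub_eq_zero, eq_div_iff hv, mul_comm]
  refine ⟨_, ⟨⟨_, rfl⟩, (hmem _).mpr rfl⟩, ?_⟩
  rintro X ⟨⟨u, rfl⟩, hX⟩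
  rw [(hmem u).mp hX]

/-- `R - 1` and `R + 1` both factor through the rotation by `θ / 2`. -/
lemma rotAbout_origin_sub_self_zero (θ : ℝ) (p : Pt) :
    rotAbout θ O p 0 - p 0 = -2 * sin (θ / 2) * (sin (θ / 2) * p 0 + cos (θ / 2) * p 1) := by
  have hθ : θ = 2 * (θ / 2) := by ring
  simp only [rotAbout, O, pt_apply_zero, pt_apply_one]
  rw [hθ, cos_two_mul', sin_two_mul, ← hθ]
  linear_combination p 0 * sin_sq_add_cos_sq (θ / 2)

lemma rotAbout_origin_add_self_one (θ : ℝ) (p : Pt) :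
    rotAbout θ O p 1 + p 1 = 2 * cos (θ / 2) * (sin (θ / 2) * p 0 + cos (θ / 2) * p 1) := by
  have hθ : θ = 2 * (θ / 2) := by ring
  simp only [rotAbout, O, pt_apply_zero, pt_apply_one]
  rw [hθ, cos_two_mul', sin_two_mul, ← hθ]
  linear_combination (-p 1) * sin_sq_add_cos_sq (θ / 2)

lemma sin_mul_D_zero_add_cos_mul_D_one (φ : ℝ) (i : ℤ) :
    sin φ * D i 0 + cos φ * D i 1 = sin (2 * π * i / 9 + 17 * π / 18 + φ) := by
  rw [sin_add]
  simp only [D, pt_apply_zero, pt_apply_one]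
  ring

/-- The rotation by `4π/9` maps the line `L₀` onto the horizontal line `y = -cos (π/9)`. -/
lemma sin_mul_F₀_zero_add_cos_mul_F₀_one (t : ℝ) :
    sin (4 * π / 9) * F₀ t 0 + cos (4 * π / 9) * F₀ t 1 = -cos (π / 9) := by
  have hD₀ : sin (4 * π / 9) * D 0 0 + cos (4 * π / 9) * D 0 1 = -cos (π / 9) := by
    rw [sin_mul_D_zero_add_cos_mul_D_one,
      show 2 * π * ((0 : ℤ) : ℝ) / 9 + 17 * π / 18 + 4 * π / 9 = π - π / 9 + π / 2 by push_cast; ring,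
      sin_add_pi_div_two, cos_pi_sub]
  have hD₁ : sin (4 * π / 9) * D 1 0 + cos (4 * π / 9) * D 1 1 = -cos (π / 9) := by
    rw [sin_mul_D_zero_add_cos_mul_D_one,
      show 2 * π * ((1 : ℤ) : ℝ) / 9 + 17 * π / 18 + 4 * π / 9 = π / 9 + π + π / 2 by push_cast; ring,
      sin_add_pi_div_two, cos_add_pi]
  simp only [F₀, PiLp.add_apply, PiLp.smul_apply, smul_eq_mul]
  linear_combination (1 - t) * hD₀ + t * hD₁

theorem N0_tangent_to_parabola (t : ℝ) : ∃! X : Pt, X ∈ N₀ t ∩ parab := by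
  have hhalf : 8 * π / 9 / 2 = 4 * π / 9 := by ring
  have hsupport := sin_mul_F₀_zero_add_cos_mul_F₀_one t
  refine existsUnique_mem_lineThrough_inter_parabola ?_ (norm_rotAbout_origin _ _).symm ?_
  · have hsin : 0 < sin (4 * π / 9) := sin_pos_of_pos_of_lt_pi (by positivity) (by linarith [pi_pos])
    have hcos : 0 < cos (π / 9) := cos_pos_of_mem_Ioo ⟨by linarith [pi_pos], by linarith [pi_pos]⟩
    have hgap := rotAbout_origin_sub_self_zero (8 * π / 9) (F₀ t)
    rw [hhalf, hsupport] at hgap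
    nlinarith
  · have hcos : cos (4 * π / 9) = sin (π / 18) := by
      rw [← cos_pi_div_two_sub]; congr 1; ring
    rw [add_comm, rotAbout_origin_add_self_one, hhalf, hsupport, hcos, s]
    ring
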